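/- arXiv:2501.07406 — 3 statements merged into one kernel-verified Lean document; each statement's English description precedes it below -/
import Mathlib

section
/- Let M̂ = [L; M] be an (n+k)×k quaternionic matrix such that: M is symmetric; L L† is positive definite; R := L†L + M†M is real and invertible; and there exist t ∈ [0,1] and a real antisymmetric k×k matrix ρ with t·M·i − i·M + [ρ,M] = 0 and [ρ,R] = 0. If Δ(x)†Δ(x) is invertible for every x ∈ ℍ of the form x = x₀ + x₁i + x₂j with x₂ ≥ 0, then Δ(x)†Δ(x) is invertible for every x ∈ ℍ, so M̂ ∈ M_{n,k}. -/
open Matrix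

noncomputable section

abbrev ℍ := Quaternion ℝ

/-- The quaternion `i`. -/
def qi : ℍ := ⟨0, 1, 0, 0⟩
/-- The quaternion `j`. -/
def qj : ℍ := ⟨0, 0, 1, 0⟩
/-- The quaternion `k`. -/
def qk : ℍ := ⟨0, 0, 0, 1⟩

/-- `e^{iθ} = cos θ + i sin θ` as a quaternion. -/
def eI (θ : ℝ) : ℍ := ⟨Real.cos θ, Real.sin θ, 0, 0⟩

/-- Entrywise right multiplication of a quaternionic matrix by a quaternion scalar. -/
def rsmul {I J : Type*} (A : Matrix I J ℍ) (x : ℍ) : Matrix I J ℍ := A.map (· * x)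

/-- Entrywise left multiplication of a quaternionic matrix by a quaternion scalar. -/
def lsmul {I J : Type*} (x : ℍ) (A : Matrix I J ℍ) : Matrix I J ℍ := A.map (x * ·)

/-- A quaternionic matrix is real if each entry lies in `ℝ ⊆ ℍ`. -/
def IsRealMatrix {I J : Type*} (A : Matrix I J ℍ) : Prop :=
  ∀ i j, A i j = ((A i j).re : ℍ)

/-- Positive definiteness: `v† A v` is a positive real for every nonzero `v`. -/
def IsPosDefQ {I : Type*} [Fintype I] (A : Matrix I I ℍ) : Prop :=
  ∀ v : I → ℍ, v ≠ 0 → ∃ r : ℝ, 0 < r ∧ star v ⬝ᵥ A.mulVec v = (r : ℍ)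

/-- Membership in the compact symplectic group `Sp`. -/
def IsSp {I : Type*} [Fintype I] [DecidableEq I] (Q : Matrix I I ℍ) : Prop := Qᴴ * Q = 1

/-- Inclusion of real matrices into quaternionic matrices. -/
def qmap {I J : Type*} (K : Matrix I J ℝ) : Matrix I J ℍ := K.map (fun r => (r : ℍ))

/-- The matrix `U = [0; I_k]`. -/
def Uh (n k : ℕ) : Matrix (Fin n ⊕ Fin k) (Fin k) ℍ := Matrix.fromRows 0 1

/-- The matrix `M̂ = [L; M]`. -/
def Mh {n k : ℕ} (L : Matrix (Fin n) (Fin k) ℍ) (M : Matrix (Fin k) (Fin k) ℍ) :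
    Matrix (Fin n ⊕ Fin k) (Fin k) ℍ := Matrix.fromRows L M

/-- `Δ(x) = a − b·x`. -/
def Delta {n k : ℕ} (a b : Matrix (Fin n ⊕ Fin k) (Fin k) ℍ) (x : ℍ) :
    Matrix (Fin n ⊕ Fin k) (Fin k) ℍ := a - rsmul b x

/-- ADHM data: `b` has full column rank and `Δ(x)†Δ(x)` is real positive definite for all `x`. -/
def IsADHM {n k : ℕ} (a b : Matrix (Fin n ⊕ Fin k) (Fin k) ℍ) : Prop :=
  (∀ v : Fin k → ℍ, b.mulVec v = 0 → v = 0) ∧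
  ∀ x : ℍ, IsRealMatrix ((Delta a b x)ᴴ * Delta a b x) ∧
    IsPosDefQ ((Delta a b x)ᴴ * Delta a b x)

/-- Membership of `M̂ = [L; M]` in `M_{n,k}`. -/
def InM {n k : ℕ} (L : Matrix (Fin n) (Fin k) ℍ) (M : Matrix (Fin k) (Fin k) ℍ) : Prop :=
  Mᵀ = M ∧ IsPosDefQ (L * Lᴴ) ∧
  IsRealMatrix (Lᴴ * L + Mᴴ * M) ∧ IsUnit (Lᴴ * L + Mᴴ * M) ∧
  ∀ x : ℍ, IsUnit ((Delta (Mh L M) (Uh n k) x)ᴴ * Delta (Mh L M) (Uh n k) x)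

/-- The gaugeAct action of `(Q, K) ∈ Sp(n+k) × GL(k,ℝ)` on an `(n+k)×k` matrix. -/
def gaugeAct {n k : ℕ} (Q : Matrix (Fin n ⊕ Fin k) (Fin n ⊕ Fin k) ℍ)
    (K : Matrix (Fin k) (Fin k) ℝ) (a : Matrix (Fin n ⊕ Fin k) (Fin k) ℍ) :
    Matrix (Fin n ⊕ Fin k) (Fin k) ℍ :=
  Q * a * qmap K⁻¹

/-- The conformal action of a 2×2 quaternionic matrix on a pair of `(n+k)×k` matrices. -/
def confAct {n k : ℕ} (A : Matrix (Fin 2) (Fin 2) ℍ)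
    (p : Matrix (Fin n ⊕ Fin k) (Fin k) ℍ × Matrix (Fin n ⊕ Fin k) (Fin k) ℍ) :
    Matrix (Fin n ⊕ Fin k) (Fin k) ℍ × Matrix (Fin n ⊕ Fin k) (Fin k) ℍ :=
  (rsmul p.1 (A 1 1) - rsmul p.2 (A 0 1), rsmul p.2 (A 0 0) - rsmul p.1 (A 1 0))

/-- `M̂` is `Ã`-equivariant: some gaugeAct transformation undoes the conformal action of `Ã`. -/
def Equivariant {n k : ℕ} (L : Matrix (Fin n) (Fin k) ℍ) (M : Matrix (Fin k) (Fin k) ℍ)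
    (A : Matrix (Fin 2) (Fin 2) ℍ) : Prop :=
  ∃ (Q : Matrix (Fin n ⊕ Fin k) (Fin n ⊕ Fin k) ℍ) (K : Matrix (Fin k) (Fin k) ℝ),
    IsSp Q ∧ IsUnit K ∧
    gaugeAct Q K (confAct A (Mh L M, Uh n k)).1 = Mh L M ∧
    gaugeAct Q K (confAct A (Mh L M, Uh n k)).2 = Uh n k

/-- Circular `t`-symmetry: equivariance under `diag(e^{iθ}, e^{tiθ})` for all `θ`. -/
def CircularSym {n k : ℕ} (L : Matrix (Fin n) (Fin k) ℍ) (M : Matrix (Fin k) (Fin k) ℍ)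
    (t : ℝ) : Prop :=
  ∀ θ : ℝ, Equivariant L M !![eI θ, 0; 0, eI (t * θ)]

/-- Toral symmetry: equivariance under `diag(e^{iφ₁}, e^{iφ₂})` for all `φ₁, φ₂`. -/
def ToralSym {n k : ℕ} (L : Matrix (Fin n) (Fin k) ℍ) (M : Matrix (Fin k) (Fin k) ℍ) : Prop :=
  ∀ φ₁ φ₂ : ℝ, Equivariant L M !![eI φ₁, 0; 0, eI φ₂]

namespace Stmt8Aux

open Quaternion Matrix

/-- complex → quaternion (span of 1, i) -/
def c2q (z : ℂ) : ℍ := ⟨z.re, z.im, 0, 0⟩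
/-- first complex component -/
def q1 (a : ℍ) : ℂ := ⟨a.re, a.imI⟩
/-- second complex component -/
def q2 (a : ℍ) : ℂ := ⟨a.imJ, a.imK⟩

@[simp] lemma c2q_re (z : ℂ) : (c2q z).re = z.re := rfl
@[simp] lemma c2q_imI (z : ℂ) : (c2q z).imI = z.im := rfl
@[simp] lemma c2q_imJ (z : ℂ) : (c2q z).imJ = 0 := rfl
@[simp] lemma c2q_imK (z : ℂ) : (c2q z).imK = 0 := rfl
@[simp] lemma q1_re (a : ℍ) : (q1 a).re = a.re := rfl
@[simp] lemma q1_im (a : ℍ) : (q1 a).im = a.imI := rfl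
@[simp] lemma q2_re (a : ℍ) : (q2 a).re = a.imJ := rfl
@[simp] lemma q2_im (a : ℍ) : (q2 a).im = a.imK := rfl

lemma quat_ext {a b : ℍ} (h1 : q1 a = q1 b) (h2 : q2 a = q2 b) : a = b := by
  ext
  · exact congrArg Complex.re h1
  · exact congrArg Complex.im h1
  · exact congrArg Complex.re h2
  · exact congrArg Complex.im h2

@[simp] lemma q1_add (a b : ℍ) : q1 (a + b) = q1 a + q1 b := by
  apply Complex.ext <;> simp
@[simp] lemma q2_add (a b : ℍ) : q2 (a + b) = q2 a + q2 b := by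
  apply Complex.ext <;> simp
@[simp] lemma q1_zero : q1 0 = 0 := by apply Complex.ext <;> simp
@[simp] lemma q2_zero : q2 0 = 0 := by apply Complex.ext <;> simp

/-- `q1` as an additive monoid hom. -/
def q1h : ℍ →+ ℂ := ⟨⟨q1, q1_zero⟩, q1_add⟩
def q2h : ℍ →+ ℂ := ⟨⟨q2, q2_zero⟩, q2_add⟩

lemma q1_mul_c2q_left (z : ℂ) (a : ℍ) : q1 (c2q z * a) = z * q1 a := by
  apply Complex.ext <;> simp [Quaternion.re_mul, Quaternion.imI_mul, q1] <;> ring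
lemma q2_mul_c2q_left (z : ℂ) (a : ℍ) : q2 (c2q z * a) = z * q2 a := by
  apply Complex.ext <;> simp [Quaternion.imJ_mul, Quaternion.imK_mul, q2] <;> ring
lemma q1_mul_c2q_right (z : ℂ) (a : ℍ) : q1 (a * c2q z) = q1 a * z := by
  apply Complex.ext <;> simp [Quaternion.re_mul, Quaternion.imI_mul, q1] <;> ring
lemma q2_mul_c2q_right (z : ℂ) (a : ℍ) : q2 (a * c2q z) = q2 a * (starRingEnd ℂ) z := by
  apply Complex.ext <;> simp [Quaternion.imJ_mul, Quaternion.imK_mul, q2] <;> ring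

lemma q1_coe_mul (r : ℝ) (a : ℍ) : q1 ((r : ℍ) * a) = (r : ℂ) * q1 a := by
  apply Complex.ext <;> simp
lemma q2_coe_mul (r : ℝ) (a : ℍ) : q2 ((r : ℍ) * a) = (r : ℂ) * q2 a := by
  apply Complex.ext <;> simp
lemma q1_mul_coe (r : ℝ) (a : ℍ) : q1 (a * (r : ℍ)) = q1 a * (r : ℂ) := by
  apply Complex.ext <;> simp
lemma q2_mul_coe (r : ℝ) (a : ℍ) : q2 (a * (r : ℍ)) = q2 a * (r : ℂ) := by
  apply Complex.ext <;> simp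
lemma q1_smul (r : ℝ) (a : ℍ) : q1 (r • a) = (r : ℂ) * q1 a := by
  apply Complex.ext <;> simp
lemma q2_smul (r : ℝ) (a : ℍ) : q2 (r • a) = (r : ℂ) * q2 a := by
  apply Complex.ext <;> simp

@[simp] lemma c2q_I : c2q Complex.I = qi := by ext <;> simp [qi]

lemma c2q_exp_mul_I (θ : ℝ) : c2q (Complex.exp (θ * Complex.I)) = eI θ := by
  ext <;> simp [eI, Complex.exp_ofReal_mul_I_re, Complex.exp_ofReal_mul_I_im]

end Stmt8Aux
namespace Stmt8Aux

open Quaternion Matrix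

variable {I J K' : Type*}

@[simp] lemma rsmul_apply (A : Matrix I J ℍ) (x : ℍ) (i : I) (j : J) :
    rsmul A x i j = A i j * x := rfl
@[simp] lemma lsmul_apply (x : ℍ) (A : Matrix I J ℍ) (i : I) (j : J) :
    lsmul x A i j = x * A i j := rfl
@[simp] lemma qmap_apply (A : Matrix I J ℝ) (i : I) (j : J) :
    qmap A i j = (A i j : ℍ) := rfl

lemma rsmul_rsmul (A : Matrix I J ℍ) (p q : ℍ) : rsmul (rsmul A p) q = rsmul A (p * q) := by
  refine Matrix.ext fun i j => ?_; simp [mul_assoc]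
lemma lsmul_lsmul (p q : ℍ) (A : Matrix I J ℍ) : lsmul p (lsmul q A) = lsmul (p * q) A := by
  refine Matrix.ext fun i j => ?_; simp [mul_assoc]
@[simp] lemma rsmul_one_scalar (A : Matrix I J ℍ) : rsmul A 1 = A := by refine Matrix.ext fun i j => ?_; simp
@[simp] lemma lsmul_one_scalar (A : Matrix I J ℍ) : lsmul 1 A = A := by refine Matrix.ext fun i j => ?_; simp
lemma rsmul_lsmul (p q : ℍ) (A : Matrix I J ℍ) :
    rsmul (lsmul p A) q = lsmul p (rsmul A q) := by refine Matrix.ext fun i j => ?_; simp [mul_assoc]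

variable [Fintype J]

lemma mul_rsmul (A : Matrix I J ℍ) (B : Matrix J K' ℍ) (q : ℍ) :
    A * rsmul B q = rsmul (A * B) q := by
  refine Matrix.ext fun i j => ?_; simp [Matrix.mul_apply, Finset.sum_mul, mul_assoc]
lemma lsmul_mul (p : ℍ) (A : Matrix I J ℍ) (B : Matrix J K' ℍ) :
    lsmul p A * B = lsmul p (A * B) := by
  refine Matrix.ext fun i j => ?_; simp [Matrix.mul_apply, Finset.mul_sum, mul_assoc]
lemma rsmul_mul_qmap (A : Matrix I J ℍ) (q : ℍ) (Km : Matrix J K' ℝ) :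
    rsmul A q * qmap Km = rsmul (A * qmap Km) q := by
  refine Matrix.ext fun i j => ?_
  simp only [Matrix.mul_apply, rsmul_apply, qmap_apply]
  rw [Finset.sum_congr rfl fun c _ => ?_]
  · rw [← Finset.sum_mul]
  · rw [mul_assoc, mul_assoc, Quaternion.coe_commutes]
lemma qmap_mul_lsmul (Km : Matrix I J ℝ) (p : ℍ) (A : Matrix J K' ℍ) :
    qmap Km * lsmul p A = lsmul p (qmap Km * A) := by
  refine Matrix.ext fun i j => ?_
  simp only [Matrix.mul_apply, lsmul_apply, qmap_apply, Finset.mul_sum]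
  refine Finset.sum_congr rfl fun c _ => ?_
  rw [← mul_assoc, ← mul_assoc, Quaternion.coe_commutes]

lemma conjTranspose_lsmul (p : ℍ) (A : Matrix I J ℍ) :
    (lsmul p A)ᴴ = rsmul Aᴴ (star p) := by
  refine Matrix.ext fun i j => ?_; simp [Matrix.conjTranspose_apply]
lemma conjTranspose_rsmul (A : Matrix I J ℍ) (q : ℍ) :
    (rsmul A q)ᴴ = lsmul (star q) Aᴴ := by
  refine Matrix.ext fun i j => ?_; simp [Matrix.conjTranspose_apply]

lemma rsmul_sub (A B : Matrix I J ℍ) (q : ℍ) : rsmul (A - B) q = rsmul A q - rsmul B q := by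
  refine Matrix.ext fun i j => ?_; simp [sub_mul]

/-- `qmap` as a ring hom. -/
def qmapRH {I : Type*} [Fintype I] [DecidableEq I] :
    Matrix I I ℝ →+* Matrix I I ℍ := (algebraMap ℝ ℍ).mapMatrix

lemma qmap_eq_RH {I : Type*} [Fintype I] [DecidableEq I] (A : Matrix I I ℝ) :
    qmap A = qmapRH A := rfl

lemma qmap_mul {I : Type*} [Fintype I] [DecidableEq I] (A B : Matrix I I ℝ) :
    qmap (A * B) = qmap A * qmap B := by
  rw [qmap_eq_RH, qmap_eq_RH, qmap_eq_RH, _root_.map_mul]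

@[simp] lemma qmap_one {I : Type*} [Fintype I] [DecidableEq I] :
    qmap (1 : Matrix I I ℝ) = 1 := by rw [qmap_eq_RH, _root_.map_one]

lemma qmap_inj {I J : Type*} (A B : Matrix I J ℝ) (h : qmap A = qmap B) : A = B := by
  refine Matrix.ext fun i j => ?_
  have := congrFun (congrFun h i) j
  simpa [qmap] using this

-- complex component maps of matrices
lemma map_q1_mul_qmap {I : Type*} [Fintype I] (A : Matrix I I ℍ) (Km : Matrix I I ℝ) :
    (A * qmap Km).map q1 = A.map q1 * Km.map (Complex.ofReal) := by
  refine Matrix.ext fun i j => ?_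
  simp only [Matrix.map_apply, Matrix.mul_apply]
  rw [show (q1 : ℍ → ℂ) = q1h from rfl, map_sum]
  simp only [q1h, AddMonoidHom.coe_mk, ZeroHom.coe_mk]
  exact Finset.sum_congr rfl fun c _ => q1_mul_coe _ _
lemma map_q2_mul_qmap {I : Type*} [Fintype I] (A : Matrix I I ℍ) (Km : Matrix I I ℝ) :
    (A * qmap Km).map q2 = A.map q2 * Km.map (Complex.ofReal) := by
  refine Matrix.ext fun i j => ?_
  simp only [Matrix.map_apply, Matrix.mul_apply]
  rw [show (q2 : ℍ → ℂ) = q2h from rfl, map_sum]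
  simp only [q2h, AddMonoidHom.coe_mk, ZeroHom.coe_mk]
  exact Finset.sum_congr rfl fun c _ => q2_mul_coe _ _
lemma map_q1_qmap_mul {I : Type*} [Fintype I] (Km : Matrix I I ℝ) (A : Matrix I I ℍ) :
    (qmap Km * A).map q1 = Km.map (Complex.ofReal) * A.map q1 := by
  refine Matrix.ext fun i j => ?_
  simp only [Matrix.map_apply, Matrix.mul_apply]
  rw [show (q1 : ℍ → ℂ) = q1h from rfl, map_sum]
  simp only [q1h, AddMonoidHom.coe_mk, ZeroHom.coe_mk]
  exact Finset.sum_congr rfl fun c _ => q1_coe_mul _ _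
lemma map_q2_qmap_mul {I : Type*} [Fintype I] (Km : Matrix I I ℝ) (A : Matrix I I ℍ) :
    (qmap Km * A).map q2 = Km.map (Complex.ofReal) * A.map q2 := by
  refine Matrix.ext fun i j => ?_
  simp only [Matrix.map_apply, Matrix.mul_apply]
  rw [show (q2 : ℍ → ℂ) = q2h from rfl, map_sum]
  simp only [q2h, AddMonoidHom.coe_mk, ZeroHom.coe_mk]
  exact Finset.sum_congr rfl fun c _ => q2_coe_mul _ _

lemma map_q1_lsmul (z : ℂ) (A : Matrix I J ℍ) :
    (lsmul (c2q z) A).map q1 = z • A.map q1 := by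
  refine Matrix.ext fun i j => ?_; simpa [Matrix.map_apply] using q1_mul_c2q_left z (A i j)
lemma map_q2_lsmul (z : ℂ) (A : Matrix I J ℍ) :
    (lsmul (c2q z) A).map q2 = z • A.map q2 := by
  refine Matrix.ext fun i j => ?_; simpa [Matrix.map_apply] using q2_mul_c2q_left z (A i j)
lemma map_q1_rsmul (A : Matrix I J ℍ) (z : ℂ) :
    (rsmul A (c2q z)).map q1 = z • A.map q1 := by
  refine Matrix.ext fun i j => ?_
  simpa [Matrix.map_apply, mul_comm] using q1_mul_c2q_right z (A i j)
lemma map_q2_rsmul (A : Matrix I J ℍ) (z : ℂ) :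
    (rsmul A (c2q z)).map q2 = (starRingEnd ℂ) z • A.map q2 := by
  refine Matrix.ext fun i j => ?_
  simpa [Matrix.map_apply, mul_comm] using q2_mul_c2q_right z (A i j)
lemma map_q1_smul (r : ℝ) (A : Matrix I J ℍ) :
    (r • A).map q1 = (r : ℂ) • A.map q1 := by
  refine Matrix.ext fun i j => ?_; simpa [Matrix.map_apply] using q1_smul r (A i j)
lemma map_q2_smul (r : ℝ) (A : Matrix I J ℍ) :
    (r • A).map q2 = (r : ℂ) • A.map q2 := by
  refine Matrix.ext fun i j => ?_; simpa [Matrix.map_apply] using q2_smul r (A i j)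
lemma map_q1_sub (A B : Matrix I J ℍ) : (A - B).map q1 = A.map q1 - B.map q1 := by
  refine Matrix.ext fun i j => ?_; simp [Matrix.map_apply, q1, Complex.ext_iff]
lemma map_q2_sub (A B : Matrix I J ℍ) : (A - B).map q2 = A.map q2 - B.map q2 := by
  refine Matrix.ext fun i j => ?_; simp [Matrix.map_apply, q2, Complex.ext_iff]
lemma map_q1_add (A B : Matrix I J ℍ) : (A + B).map q1 = A.map q1 + B.map q1 := by
  refine Matrix.ext fun i j => ?_; simp [Matrix.map_apply]
lemma map_q2_add (A B : Matrix I J ℍ) : (A + B).map q2 = A.map q2 + B.map q2 := by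
  refine Matrix.ext fun i j => ?_; simp [Matrix.map_apply]

lemma mat_ext_q (A B : Matrix I J ℍ) (h1 : A.map q1 = B.map q1) (h2 : A.map q2 = B.map q2) :
    A = B := by
  refine Matrix.ext fun i j => ?_
  exact quat_ext (congrFun (congrFun h1 i) j) (congrFun (congrFun h2 i) j)

end Stmt8Aux
namespace Stmt8Aux

open Matrix NormedSpace Nat

lemma exp_intertwine_aux {𝔸 : Type*} [NormedRing 𝔸] [NormedAlgebra ℝ 𝔸] [CompleteSpace 𝔸]
    (a b c : 𝔸) (h : a * b = b * c) : exp a * b = b * exp c := by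
  have hpow : ∀ m : ℕ, a ^ m * b = b * c ^ m := by
    intro m; induction m with
    | zero => simp
    | succ m ih =>
        rw [pow_succ, pow_succ, mul_assoc, h, ← mul_assoc, ih, mul_assoc]
  have hsa := expSeries_summable' (𝕂 := ℝ) a
  have hsc := expSeries_summable' (𝕂 := ℝ) c
  rw [exp_eq_tsum ℝ]
  have h1 : (∑' n : ℕ, (n !⁻¹ : ℝ) • a ^ n) * b = ∑' n : ℕ, ((n !⁻¹ : ℝ) • a ^ n) * b :=
    (hsa.hasSum.map (AddMonoidHom.mulRight b) (continuous_mul_right b)).tsum_eq.symm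
  have h2 : b * (∑' n : ℕ, (n !⁻¹ : ℝ) • c ^ n) = ∑' n : ℕ, b * ((n !⁻¹ : ℝ) • c ^ n) :=
    (hsc.hasSum.map (AddMonoidHom.mulLeft b) (continuous_mul_left b)).tsum_eq.symm
  rw [h1, h2]
  exact tsum_congr fun n => by rw [smul_mul_assoc, hpow, mul_smul_comm]

lemma mexp_intertwine {m : Type*} [Fintype m] [DecidableEq m] {𝔸 : Type*}
    [NormedRing 𝔸] [NormedAlgebra ℝ 𝔸] [CompleteSpace 𝔸] (a b c : Matrix m m 𝔸)
    (h : a * b = b * c) : exp a * b = b * exp c := by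
  have hcs : CompleteSpace (Matrix m m 𝔸) := inferInstance
  letI : SeminormedRing (Matrix m m 𝔸) := Matrix.linftyOpSemiNormedRing
  letI : NormedRing (Matrix m m 𝔸) := Matrix.linftyOpNormedRing
  letI : NormedAlgebra ℝ (Matrix m m 𝔸) := Matrix.linftyOpNormedAlgebra
  letI : @CompleteSpace (Matrix m m 𝔸) (PseudoMetricSpace.toUniformSpace) := hcs
  exact exp_intertwine_aux a b c h

lemma mexp_mul_neg {m : Type*} [Fintype m] [DecidableEq m] (a : Matrix m m ℝ) :
    exp a * exp (-a) = 1 := by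
  rw [← Matrix.exp_add_of_commute a (-a) (Commute.neg_right (Commute.refl a)),
    add_neg_cancel, exp_zero]

lemma mexp_neg_mul {m : Type*} [Fintype m] [DecidableEq m] (a : Matrix m m ℝ) :
    exp (-a) * exp a = 1 := by
  rw [← Matrix.exp_add_of_commute (-a) a (Commute.neg_left (Commute.refl a)),
    neg_add_cancel, exp_zero]

lemma mexp_transpose_antisym {m : Type*} [Fintype m] [DecidableEq m] (ρ : Matrix m m ℝ)
    (hρ : ρᵀ = -ρ) (s : ℝ) : (exp (s • ρ))ᵀ = exp (-(s • ρ)) := by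
  rw [← Matrix.exp_transpose, transpose_smul, hρ, smul_neg]

/-- exp of a complex scalar matrix. -/
lemma mexp_scalar {m : Type*} [Fintype m] [DecidableEq m] (z : ℂ) :
    exp (z • (1 : Matrix m m ℂ)) = Complex.exp z • (1 : Matrix m m ℂ) := by
  have h0 : z • (1 : Matrix m m ℂ) = algebraMap ℂ (Matrix m m ℂ) z := by
    simp [Algebra.algebraMap_eq_smul_one]
  have hfun : (⇑(algebraMap ℂ (Matrix m m ℂ))) = fun w : ℂ => w • (1 : Matrix m m ℂ) :=
    funext fun w => by simp [Algebra.algebraMap_eq_smul_one]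
  have hc : Continuous (algebraMap ℂ (Matrix m m ℂ)) := by
    rw [hfun]; exact continuous_id.smul continuous_const
  rw [h0]
  open scoped Matrix.Norms.Operator in
  erw [← map_exp (algebraMap ℂ (Matrix m m ℂ)) hc z]
  rw [show exp z = Complex.exp z by
    rw [Complex.exp_eq_exp_ℂ]]
  simp [Algebra.algebraMap_eq_smul_one]

/-- exp commutes with the entrywise real → complex map. -/
lemma mexp_map_complex {m : Type*} [Fintype m] [DecidableEq m] (a : Matrix m m ℝ) :
    (exp a).map Complex.ofReal = exp (a.map Complex.ofReal) := by
  have hc : Continuous fun A : Matrix m m ℝ => A.map Complex.ofReal := by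
    apply continuous_matrix
    intro i j
    exact Complex.continuous_ofReal.comp ((continuous_apply _).comp (continuous_apply _))
  open scoped Matrix.Norms.Operator in
  exact map_exp ((algebraMap ℝ ℂ).mapMatrix) hc a

end Stmt8Aux
namespace Stmt8Aux

open Matrix NormedSpace Quaternion

variable {k : ℕ}

lemma smul_real_complex_mat (θ : ℝ) (A : Matrix (Fin k) (Fin k) ℂ) :
    θ • A = (θ : ℂ) • A := by
  refine Matrix.ext fun i j => ?_
  simp [Complex.real_smul]

/-- eigen-intertwining: if `[ρC, N] = c • N` then `exp (θ•ρC) * N = e^{θc} • (N * exp (θ•ρC))`. -/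
lemma eigen_intertwine (ρC N : Matrix (Fin k) (Fin k) ℂ) (c : ℂ) (θ : ℝ)
    (h : ρC * N - N * ρC = c • N) :
    exp (θ • ρC) * N = Complex.exp (θ * c) • (N * exp (θ • ρC)) := by
  have hρN : ρC * N = N * ρC + c • N := by rw [← h]; abel
  have hmain : (θ • ρC) * N = N * (θ • ρC + ((θ : ℂ) * c) • 1) := by
    rw [smul_real_complex_mat, smul_mul_assoc, hρN, smul_add, smul_smul, mul_add,
      mul_smul_comm, mul_smul_comm, mul_one]
  have h2 := mexp_intertwine (θ • ρC) N (θ • ρC + ((θ : ℂ) * c) • 1) hmain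
  rw [h2, Matrix.exp_add_of_commute _ _ (((Commute.one_right (θ • ρC)).smul_right _)),
    mexp_scalar, mul_smul_comm, mul_smul_comm, mul_one]

lemma complex_comps (M : Matrix (Fin k) (Fin k) ℍ) (t : ℝ) (ρ : Matrix (Fin k) (Fin k) ℝ)
    (h1 : t • rsmul M qi - lsmul qi M + (qmap ρ * M - M * qmap ρ) = 0) :
    (ρ.map Complex.ofReal * M.map q1 - M.map q1 * ρ.map Complex.ofReal
        = (((1 : ℂ) - t) * Complex.I) • M.map q1) ∧
    (ρ.map Complex.ofReal * M.map q2 - M.map q2 * ρ.map Complex.ofReal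
        = (((1 : ℂ) + t) * Complex.I) • M.map q2) := by
  have e0q1 : (0 : Matrix (Fin k) (Fin k) ℍ).map q1 = 0 := by
    refine Matrix.ext fun i j => ?_; simp [Matrix.map_apply]
  have e0q2 : (0 : Matrix (Fin k) (Fin k) ℍ).map q2 = 0 := by
    refine Matrix.ext fun i j => ?_; simp [Matrix.map_apply]
  constructor
  · have e1 := congrArg (fun A : Matrix (Fin k) (Fin k) ℍ => A.map q1) h1
    simp only [map_q1_add, map_q1_sub, map_q1_smul] at e1
    rw [show qi = c2q Complex.I from c2q_I.symm, map_q1_rsmul, map_q1_lsmul,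
      map_q1_qmap_mul, map_q1_mul_qmap, e0q1, smul_smul] at e1
    have hC := eq_neg_of_add_eq_zero_right e1
    rw [hC, neg_sub, ← sub_smul]
    congr 1
    ring
  · have e1 := congrArg (fun A : Matrix (Fin k) (Fin k) ℍ => A.map q2) h1
    simp only [map_q2_add, map_q2_sub, map_q2_smul] at e1
    rw [show qi = c2q Complex.I from c2q_I.symm, map_q2_rsmul, map_q2_lsmul,
      map_q2_qmap_mul, map_q2_mul_qmap, e0q2, smul_smul] at e1
    have hC := eq_neg_of_add_eq_zero_right e1
    rw [hC, neg_sub, ← sub_smul]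
    rw [show (starRingEnd ℂ) Complex.I = -Complex.I from Complex.conj_I]
    congr 1
    ring

/-- The key circular-symmetry identity (★). -/
lemma star_key (M : Matrix (Fin k) (Fin k) ℍ) (t : ℝ) (ρ : Matrix (Fin k) (Fin k) ℝ)
    (h1 : t • rsmul M qi - lsmul qi M + (qmap ρ * M - M * qmap ρ) = 0) (θ : ℝ) :
    lsmul (eI θ) M * qmap (exp (θ • ρ)) = qmap (exp (θ • ρ)) * rsmul M (eI (t * θ)) := by
  obtain ⟨hc1, hc2⟩ := complex_comps M t ρ h1
  set ρC : Matrix (Fin k) (Fin k) ℂ := ρ.map Complex.ofReal with hρC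
  have hmapsmul : ((θ • ρ).map Complex.ofReal) = θ • ρC := by
    refine Matrix.ext fun i j => ?_
    simp [Matrix.map_apply, hρC]
  have hgC : (exp (θ • ρ)).map Complex.ofReal = exp (θ • ρC) := by
    rw [mexp_map_complex, hmapsmul]
  set g : Matrix (Fin k) (Fin k) ℝ := exp (θ • ρ) with hg
  set uC : ℂ := Complex.exp (θ * Complex.I) with huC
  set vC : ℂ := Complex.exp ((t * θ : ℝ) * Complex.I) with hvC
  have hu : eI θ = c2q uC := (c2q_exp_mul_I θ).symm
  have hv : eI (t * θ) = c2q vC := (c2q_exp_mul_I (t * θ)).symm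
  apply mat_ext_q
  · rw [map_q1_mul_qmap, map_q1_qmap_mul, hu, hv, map_q1_lsmul, map_q1_rsmul, hgC]
    rw [smul_mul_assoc, mul_smul_comm,
      eigen_intertwine ρC (M.map q1) (((1 : ℂ) - t) * Complex.I) θ hc1, smul_smul]
    congr 1
    rw [huC, hvC, ← Complex.exp_add]
    congr 1
    push_cast
    ring
  · rw [map_q2_mul_qmap, map_q2_qmap_mul, hu, hv, map_q2_lsmul, map_q2_rsmul, hgC]
    rw [smul_mul_assoc, mul_smul_comm,
      eigen_intertwine ρC (M.map q2) (((1 : ℂ) + t) * Complex.I) θ hc2, smul_smul]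
    congr 1
    rw [hvC, ← Complex.exp_conj, huC, ← Complex.exp_add]
    congr 1
    rw [_root_.map_mul, Complex.conj_I, Complex.conj_ofReal]
    push_cast
    ring

end Stmt8Aux
namespace Stmt8Aux

open Matrix NormedSpace Quaternion

lemma eI_mul_star (s : ℝ) : eI s * star (eI s) = 1 := by
  rw [self_mul_star]
  have : normSq (eI s) = 1 := by rw [normSq_def']; simp [eI]
  rw [this]
  exact Quaternion.coe_one

lemma star_eI_mul (s : ℝ) : star (eI s) * eI s = 1 := by
  rw [star_mul_self]
  have : normSq (eI s) = 1 := by rw [normSq_def']; simp [eI]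
  rw [this]
  exact Quaternion.coe_one

/-- Conjugation by a unit quaternion, as a ring equivalence. -/
def conjUnit (v : ℍ) (hv1 : v * star v = 1) (hv2 : star v * v = 1) : ℍ ≃+* ℍ where
  toFun a := v * a * star v
  invFun a := star v * a * v
  left_inv a := by
    calc star v * (v * a * star v) * v = (star v * v) * a * (star v * v) := by
          simp only [mul_assoc]
      _ = a := by rw [hv2, one_mul, mul_one]
  right_inv a := by
    calc v * (star v * a * v) * star v = (v * star v) * a * (v * star v) := by
          simp only [mul_assoc]
      _ = a := by rw [hv1, one_mul, mul_one]
  map_mul' a b := by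
    calc v * (a * b) * star v = v * a * ((star v * v) * (b * star v)) := by
          rw [hv2, one_mul]; simp only [mul_assoc]
      _ = v * a * star v * (v * (b * star v)) := by simp only [mul_assoc]
      _ = v * a * star v * (v * b * star v) := by simp only [mul_assoc]
  map_add' a b := by
    show v * (a + b) * star v = v * a * star v + v * b * star v
    rw [mul_add, add_mul]

variable {k : ℕ}

/-- Matrix-level conjugation. -/
def conjMat (v : ℍ) (hv1 : v * star v = 1) (hv2 : star v * v = 1) :
    Matrix (Fin k) (Fin k) ℍ ≃+* Matrix (Fin k) (Fin k) ℍ :=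
  (conjUnit v hv1 hv2).mapMatrix

lemma conjMat_apply (v : ℍ) (hv1 : v * star v = 1) (hv2 : star v * v = 1)
    (A : Matrix (Fin k) (Fin k) ℍ) (i j : Fin k) :
    conjMat v hv1 hv2 A i j = v * A i j * star v := rfl

lemma qmap_conjTranspose (A : Matrix (Fin k) (Fin k) ℝ) : (qmap A)ᴴ = qmap Aᵀ := by
  refine Matrix.ext fun i j => ?_
  simp [Matrix.conjTranspose_apply]

lemma conjMat_real (v : ℍ) (hv1 : v * star v = 1) (hv2 : star v * v = 1)
    (A : Matrix (Fin k) (Fin k) ℝ) : conjMat v hv1 hv2 (qmap A) = qmap A := by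
  refine Matrix.ext fun i j => ?_
  rw [conjMat_apply, qmap_apply, mul_assoc, Quaternion.coe_commutes, ← mul_assoc, hv1, one_mul]

lemma conjMat_conjTranspose (v : ℍ) (hv1 : v * star v = 1) (hv2 : star v * v = 1)
    (A : Matrix (Fin k) (Fin k) ℍ) :
    conjMat v hv1 hv2 Aᴴ = (conjMat v hv1 hv2 A)ᴴ := by
  refine Matrix.ext fun i j => ?_
  simp only [Matrix.conjTranspose_apply, conjMat_apply, StarMul.star_mul, star_star, mul_assoc]

lemma conjMat_rsmul (v : ℍ) (hv1 : v * star v = 1) (hv2 : star v * v = 1)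
    (A : Matrix (Fin k) (Fin k) ℍ) (x : ℍ) :
    conjMat v hv1 hv2 (rsmul A x) = lsmul v (rsmul A (x * star v)) := by
  refine Matrix.ext fun i j => ?_
  rw [conjMat_apply, lsmul_apply, rsmul_apply, rsmul_apply]
  simp only [mul_assoc]

-- scalar diagonal matrices
lemma lsmul_one_eq_rsmul_one (p : ℍ) :
    lsmul p (1 : Matrix (Fin k) (Fin k) ℍ) = rsmul (1 : Matrix (Fin k) (Fin k) ℍ) p := by
  refine Matrix.ext fun i j => ?_
  by_cases h : i = j <;> simp [Matrix.one_apply, h]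

lemma rsmul_one_conjTranspose (x : ℍ) :
    (rsmul (1 : Matrix (Fin k) (Fin k) ℍ) x)ᴴ = rsmul (1 : Matrix (Fin k) (Fin k) ℍ) (star x) := by
  rw [conjTranspose_rsmul, Matrix.conjTranspose_one, lsmul_one_eq_rsmul_one]

lemma rsmul_one_mul_self (x : ℍ) :
    rsmul (1 : Matrix (Fin k) (Fin k) ℍ) (star x) * rsmul (1 : Matrix (Fin k) (Fin k) ℍ) x
      = qmap ((normSq x) • 1) := by
  rw [← lsmul_one_eq_rsmul_one, lsmul_mul, Matrix.one_mul]
  refine Matrix.ext fun i j => ?_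
  by_cases h : i = j <;>
    simp [Matrix.one_apply, h, star_mul_self, Quaternion.smul_coe]

/-- The formula for `Δ(x)† Δ(x)`. -/
lemma Delta_formula {n : ℕ} (L : Matrix (Fin n) (Fin k) ℍ) (M : Matrix (Fin k) (Fin k) ℍ)
    (x : ℍ) :
    (Delta (Mh L M) (Uh n k) x)ᴴ * Delta (Mh L M) (Uh n k) x
      = (Lᴴ * L + Mᴴ * M) - rsmul Mᴴ x - lsmul (star x) M + qmap ((normSq x) • 1) := by
  have hD : Delta (Mh L M) (Uh n k) x
      = Matrix.fromRows L (M - rsmul (1 : Matrix (Fin k) (Fin k) ℍ) x) := by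
    refine Matrix.ext fun i j => ?_
    cases i <;> simp [Delta, Mh, Uh, Matrix.sub_apply, Matrix.fromRows_apply_inl, Matrix.fromRows_apply_inr]
  rw [hD, Matrix.conjTranspose_fromRows_eq_fromCols_conjTranspose,
    Matrix.fromCols_mul_fromRows]
  set X := rsmul (1 : Matrix (Fin k) (Fin k) ℍ) x with hX
  have hXH : (M - X)ᴴ = Mᴴ - rsmul (1 : Matrix (Fin k) (Fin k) ℍ) (star x) := by
    rw [Matrix.conjTranspose_sub, rsmul_one_conjTranspose]
  rw [hXH, Matrix.sub_mul, Matrix.mul_sub, Matrix.mul_sub, rsmul_one_mul_self]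
  rw [hX, mul_rsmul, Matrix.mul_one, ← lsmul_one_eq_rsmul_one, lsmul_mul, Matrix.one_mul]
  abel

end Stmt8Aux
namespace Stmt8Aux

open Matrix NormedSpace Quaternion

variable {n k : ℕ}

lemma normSq_eI (s : ℝ) : normSq (eI s) = 1 := by rw [normSq_def']; simp [eI]

lemma key_transfer (L : Matrix (Fin n) (Fin k) ℍ) (M : Matrix (Fin k) (Fin k) ℍ)
    (t : ℝ) (ρ : Matrix (Fin k) (Fin k) ℝ) (hρ : ρᵀ = -ρ)
    (hreal : IsRealMatrix (Lᴴ * L + Mᴴ * M))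
    (h1 : t • rsmul M qi - lsmul qi M + (qmap ρ * M - M * qmap ρ) = 0)
    (h2 : qmap ρ * (Lᴴ * L + Mᴴ * M) - (Lᴴ * L + Mᴴ * M) * qmap ρ = 0)
    (θ : ℝ) (x : ℍ)
    (hx' : IsUnit ((Delta (Mh L M) (Uh n k) (eI θ * x * star (eI (t * θ))))ᴴ *
      Delta (Mh L M) (Uh n k) (eI θ * x * star (eI (t * θ))))) :
    IsUnit ((Delta (Mh L M) (Uh n k) x)ᴴ * Delta (Mh L M) (Uh n k) x) := by
  set u : ℍ := eI θ with hu
  set v : ℍ := eI (t * θ) with hv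
  set x' : ℍ := u * x * star v with hx'def
  have hv1 : v * star v = 1 := eI_mul_star _
  have hv2 : star v * v = 1 := star_eI_mul _
  have hu1 : u * star u = 1 := eI_mul_star _
  have hu2 : star u * u = 1 := star_eI_mul _
  set g : Matrix (Fin k) (Fin k) ℝ := exp (θ • ρ) with hg
  have hgT : gᵀ = exp (-(θ • ρ)) := mexp_transpose_antisym ρ hρ θ
  have hggT : g * gᵀ = 1 := by rw [hgT, hg]; exact mexp_mul_neg _
  have hgTg : gᵀ * g = 1 := by rw [hgT, hg]; exact mexp_neg_mul _
  have hqg : qmap g * qmap gᵀ = 1 := by rw [← qmap_mul, hggT, qmap_one]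
  have hqg' : qmap gᵀ * qmap g = 1 := by rw [← qmap_mul, hgTg, qmap_one]
  set R' : Matrix (Fin k) (Fin k) ℍ := Lᴴ * L + Mᴴ * M with hR'
  set Rre : Matrix (Fin k) (Fin k) ℝ := R'.map QuaternionAlgebra.re with hRre
  have hR'q : R' = qmap Rre := by
    refine Matrix.ext fun i j => ?_
    exact hreal i j
  have hρR : ρ * Rre = Rre * ρ := by
    apply qmap_inj
    rw [qmap_mul, qmap_mul, ← hR'q]
    exact sub_eq_zero.mp h2
  have hgR' : (θ • ρ) * Rre = Rre * (θ • ρ) := by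
    rw [smul_mul_assoc, hρR, mul_smul_comm]
  have hgR : g * Rre = Rre * g := mexp_intertwine _ _ _ hgR'
  have hgTR : gᵀ * Rre = Rre * gᵀ := by
    rw [hgT]
    exact mexp_intertwine _ _ _ (by rw [neg_mul, mul_neg, hgR'])
  have hstar : lsmul u M * qmap g = qmap g * rsmul M v := star_key M t ρ h1 θ
  have hstarH : qmap gᵀ * rsmul Mᴴ (star u) = lsmul (star v) Mᴴ * qmap gᵀ := by
    have hh := congrArg Matrix.conjTranspose hstar
    rwa [Matrix.conjTranspose_mul, Matrix.conjTranspose_mul, qmap_conjTranspose,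
      conjTranspose_lsmul, conjTranspose_rsmul] at hh
  -- term computations
  have hT0 : qmap gᵀ * conjMat v hv1 hv2 (qmap Rre) * qmap g = qmap Rre := by
    rw [conjMat_real, ← qmap_mul, ← qmap_mul, hgTR, mul_assoc, hgTg, mul_one]
  have hT2 : qmap gᵀ * conjMat v hv1 hv2 (rsmul Mᴴ x) * qmap g = rsmul Mᴴ x' := by
    rw [conjMat_rsmul, qmap_mul_lsmul]
    have hiter : rsmul Mᴴ (x * star v) = rsmul (rsmul Mᴴ (star u)) (u * (x * star v)) := by
      rw [rsmul_rsmul, ← mul_assoc, hu2, one_mul]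
    rw [hiter, mul_rsmul, hstarH, lsmul_mul (star v) Mᴴ (qmap gᵀ), rsmul_lsmul, lsmul_lsmul, hv1, lsmul_one_scalar, rsmul_mul_qmap,
      mul_assoc, hqg', mul_one, ← mul_assoc, ← hx'def]
  have hT3 : qmap gᵀ * conjMat v hv1 hv2 (lsmul (star x) M) * qmap g = lsmul (star x') M := by
    have hls : lsmul (star x) M = (rsmul Mᴴ x)ᴴ := by
      rw [conjTranspose_rsmul, Matrix.conjTranspose_conjTranspose]
    have hls' : lsmul (star x') M = (rsmul Mᴴ x')ᴴ := by
      rw [conjTranspose_rsmul, Matrix.conjTranspose_conjTranspose]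
    rw [hls, hls', conjMat_conjTranspose, ← hT2, Matrix.conjTranspose_mul,
      Matrix.conjTranspose_mul, qmap_conjTranspose, qmap_conjTranspose,
      Matrix.transpose_transpose, mul_assoc]
  have hnormx : normSq x' = normSq x := by
    rw [hx'def, _root_.map_mul, _root_.map_mul, normSq_star, hu, hv, normSq_eI, normSq_eI]
    ring
  have hT5 : qmap gᵀ * conjMat v hv1 hv2 (qmap (normSq x • 1)) * qmap g
      = qmap (normSq x' • 1) := by
    rw [conjMat_real, ← qmap_mul, ← qmap_mul, hnormx]
    congr 1
    rw [mul_smul_comm, smul_mul_assoc, Matrix.mul_one, hgTg]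
  -- assemble
  have hDx := Delta_formula L M x
  have hDx' := Delta_formula L M x'
  rw [← hR'] at hDx hDx'
  have hψ : qmap gᵀ *
      conjMat v hv1 hv2 ((Delta (Mh L M) (Uh n k) x)ᴴ * Delta (Mh L M) (Uh n k) x) * qmap g
      = (Delta (Mh L M) (Uh n k) x')ᴴ * Delta (Mh L M) (Uh n k) x' := by
    rw [hDx, hDx', hR'q, map_add, map_sub, map_sub]
    rw [Matrix.mul_add, Matrix.mul_sub, Matrix.mul_sub, Matrix.add_mul, Matrix.sub_mul,
      Matrix.sub_mul, hT0, hT2, hT3, hT5]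
  have hqgU : IsUnit (qmap g) := ⟨⟨qmap g, qmap gᵀ, hqg, hqg'⟩, rfl⟩
  have hqgTU : IsUnit (qmap gᵀ) := ⟨⟨qmap gᵀ, qmap g, hqg', hqg⟩, rfl⟩
  have hEunit : IsUnit (conjMat v hv1 hv2
      ((Delta (Mh L M) (Uh n k) x)ᴴ * Delta (Mh L M) (Uh n k) x)) := by
    have heq : qmap g * (qmap gᵀ *
            conjMat v hv1 hv2 ((Delta (Mh L M) (Uh n k) x)ᴴ * Delta (Mh L M) (Uh n k) x)
            * qmap g) * qmap gᵀ
        = conjMat v hv1 hv2 ((Delta (Mh L M) (Uh n k) x)ᴴ * Delta (Mh L M) (Uh n k) x) := by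
      simp only [← mul_assoc]
      rw [hqg, one_mul, mul_assoc, hqg, mul_one]
    rw [← heq, hψ]
    exact (hqgU.mul hx').mul hqgTU
  have hfin := hEunit.map (conjMat v hv1 hv2).symm.toRingHom
  rwa [RingEquiv.toRingHom_eq_coe, RingHom.coe_coe, RingEquiv.symm_apply_apply] at hfin

end Stmt8Aux
namespace Stmt8Aux

@[simp] lemma eI_re (s : ℝ) : (eI s).re = Real.cos s := rfl
@[simp] lemma eI_imI (s : ℝ) : (eI s).imI = Real.sin s := rfl
@[simp] lemma eI_imJ (s : ℝ) : (eI s).imJ = 0 := rfl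
@[simp] lemma eI_imK (s : ℝ) : (eI s).imK = 0 := rfl

end Stmt8Aux
/-- Under the symmetry hypotheses, invertibility of `Δ(x)†Δ(x)` on the half
space `{x = x₀ + x₁i + x₂j, x₂ ≥ 0}` implies it everywhere, so `M̂ ∈ M_{n,k}`. -/
theorem stmt8 {n k : ℕ} (L : Matrix (Fin n) (Fin k) ℍ) (M : Matrix (Fin k) (Fin k) ℍ)
    (hsym : Mᵀ = M) (hpos : IsPosDefQ (L * Lᴴ))
    (hreal : IsRealMatrix (Lᴴ * L + Mᴴ * M)) (hunit : IsUnit (Lᴴ * L + Mᴴ * M))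
    (t : ℝ) (ht0 : 0 ≤ t) (ht1 : t ≤ 1)
    (ρ : Matrix (Fin k) (Fin k) ℝ) (hρ : ρᵀ = -ρ)
    (h1 : t • rsmul M qi - lsmul qi M + (qmap ρ * M - M * qmap ρ) = 0)
    (h2 : qmap ρ * (Lᴴ * L + Mᴴ * M) - (Lᴴ * L + Mᴴ * M) * qmap ρ = 0)
    (hhalf : ∀ x : ℍ, x.imK = 0 → 0 ≤ x.imJ →
      IsUnit ((Delta (Mh L M) (Uh n k) x)ᴴ * Delta (Mh L M) (Uh n k) x)) :
    (∀ x : ℍ, IsUnit ((Delta (Mh L M) (Uh n k) x)ᴴ * Delta (Mh L M) (Uh n k) x)) ∧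
    InM L M := by
  have main : ∀ x : ℍ, IsUnit ((Delta (Mh L M) (Uh n k) x)ᴴ * Delta (Mh L M) (Uh n k) x) := by
    intro x
    by_cases h0 : x.imJ = 0 ∧ x.imK = 0
    · exact hhalf x h0.2 (le_of_eq h0.1.symm)
    · set w : ℂ := ⟨x.imJ, -x.imK⟩ with hwdef
      have hw0 : w ≠ 0 := by
        intro hc
        apply h0
        refine ⟨congrArg Complex.re hc, ?_⟩
        have h2' := congrArg Complex.im hc
        simpa [hwdef, neg_eq_zero] using h2'
      have hpt : (0 : ℝ) < 1 + t := by linarith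
      set θ : ℝ := w.arg / (1 + t) with hθdef
      have hsum : θ + t * θ = w.arg := by
        rw [hθdef]
        field_simp
      have hcos : Real.cos (θ + t * θ) = x.imJ / ‖w‖ := by
        rw [hsum, Complex.cos_arg hw0]
      have hsin : Real.sin (θ + t * θ) = -x.imK / ‖w‖ := by
        rw [hsum, Complex.sin_arg]
      set x' : ℍ := eI θ * x * star (eI (t * θ)) with hx'def
      have himJ : x'.imJ = x.imJ * Real.cos (θ + t * θ) - x.imK * Real.sin (θ + t * θ) := by
        rw [hx'def]
        simp only [Quaternion.imJ_mul, Quaternion.re_mul, Quaternion.imI_mul,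
          Quaternion.imK_mul, Quaternion.re_star, Quaternion.imI_star, Quaternion.imJ_star,
          Quaternion.imK_star, Stmt8Aux.eI_re, Stmt8Aux.eI_imI, Stmt8Aux.eI_imJ,
          Stmt8Aux.eI_imK]
        rw [Real.cos_add, Real.sin_add]
        ring
      have himK : x'.imK = x.imJ * Real.sin (θ + t * θ) + x.imK * Real.cos (θ + t * θ) := by
        rw [hx'def]
        simp only [Quaternion.imJ_mul, Quaternion.re_mul, Quaternion.imI_mul,
          Quaternion.imK_mul, Quaternion.re_star, Quaternion.imI_star, Quaternion.imJ_star,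
          Quaternion.imK_star, Stmt8Aux.eI_re, Stmt8Aux.eI_imI, Stmt8Aux.eI_imJ,
          Stmt8Aux.eI_imK]
        rw [Real.cos_add, Real.sin_add]
        ring
      apply Stmt8Aux.key_transfer L M t ρ hρ hreal h1 h2 θ x
      apply hhalf
      · show x'.imK = 0
        rw [himK, hsin, hcos]
        ring
      · show 0 ≤ x'.imJ
        rw [himJ, hcos, hsin]
        have hval : x.imJ * (x.imJ / ‖w‖) - x.imK * (-x.imK / ‖w‖)
            = (x.imJ ^ 2 + x.imK ^ 2) / ‖w‖ := by ring
        rw [hval]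
        exact div_nonneg (by positivity) (norm_nonneg _)
  exact ⟨main, hsym, hpos, hreal, hunit, main⟩
end
end

section
/- Let M̂ = [L; M] ∈ M_{n,k}, let t ∈ [0,1], and let ρ be a real antisymmetric k×k matrix with t·M·i − i·M + [ρ, M] = 0 and [ρ, R] = 0, where R := L†L + M†M. Then y := L(ρ − t·i·I_k)L†(LL†)⁻¹ satisfies y† = −y; that is, y ∈ sp(n). -/
open Matrix

noncomputable section

namespace Stmt10Helpers

variable {k : ℕ}

lemma mul_smulone (A : Matrix (Fin k) (Fin k) ℍ) (c : ℍ) :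
    A * (c • (1 : Matrix (Fin k) (Fin k) ℍ)) = Matrix.of fun i j => A i j * c := by
  refine Matrix.ext fun i j => ?_
  simp [Matrix.mul_apply, Matrix.one_apply, mul_ite, ite_mul, mul_zero, mul_one,
    Finset.sum_ite_eq, smul_eq_mul, mul_assoc]

lemma smulone_mul (c : ℍ) (A : Matrix (Fin k) (Fin k) ℍ) :
    (c • (1 : Matrix (Fin k) (Fin k) ℍ)) * A = Matrix.of fun i j => c * A i j := by
  refine Matrix.ext fun i j => ?_
  rw [Matrix.smul_mul, Matrix.one_mul]
  simp

lemma central_comm (c : ℍ) (hc : ∀ x : ℍ, c * x = x * c) (A : Matrix (Fin k) (Fin k) ℍ) :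
    (c • (1 : Matrix (Fin k) (Fin k) ℍ)) * A = A * (c • (1 : Matrix (Fin k) (Fin k) ℍ)) := by
  rw [mul_smulone, smulone_mul]
  exact Matrix.ext fun i j => hc (A i j)

lemma qi_comm_real (A : Matrix (Fin k) (Fin k) ℍ) (hA : IsRealMatrix A) :
    (qi • (1 : Matrix (Fin k) (Fin k) ℍ)) * A = A * (qi • (1 : Matrix (Fin k) (Fin k) ℍ)) := by
  rw [mul_smulone, smulone_mul]
  refine Matrix.ext fun i j => ?_
  show qi * A i j = A i j * qi
  rw [hA i j, Quaternion.coe_commutes]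

lemma star_qi : star qi = -qi := by ext <;> simp <;> simp [qi]

lemma rsmul_eq_mul (A : Matrix (Fin k) (Fin k) ℍ) (c : ℍ) :
    rsmul A c = A * (c • (1 : Matrix (Fin k) (Fin k) ℍ)) := by
  rw [mul_smulone]; rfl

lemma lsmul_eq_mul (c : ℍ) (A : Matrix (Fin k) (Fin k) ℍ) :
    lsmul c A = (c • (1 : Matrix (Fin k) (Fin k) ℍ)) * A := by
  rw [smulone_mul]; rfl

lemma real_smul_eq (t : ℝ) (A : Matrix (Fin k) (Fin k) ℍ) :
    t • A = (((t : ℝ) : ℍ) • (1 : Matrix (Fin k) (Fin k) ℍ)) * A := by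
  rw [smulone_mul]
  refine Matrix.ext fun i j => ?_
  show t • A i j = ((t : ℝ) : ℍ) * A i j
  rw [Quaternion.coe_mul_eq_smul]

lemma smulone_conjT (c : ℍ) :
    ((c • (1 : Matrix (Fin k) (Fin k) ℍ)))ᴴ = (star c) • (1 : Matrix (Fin k) (Fin k) ℍ) := by
  refine Matrix.ext fun i j => ?_
  simp only [Matrix.conjTranspose_apply, Matrix.smul_apply, Matrix.one_apply, smul_eq_mul]
  by_cases h : j = i
  · subst h; simp
  · simp [h, Ne.symm h]

lemma qmap_conjT (ρ : Matrix (Fin k) (Fin k) ℝ) (hρ : ρᵀ = -ρ) :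
    (qmap ρ)ᴴ = -(qmap ρ) := by
  refine Matrix.ext fun i j => ?_
  have h := congrFun (congrFun hρ i) j
  simp only [Matrix.transpose_apply, Matrix.neg_apply] at h
  simp only [qmap, Matrix.conjTranspose_apply, Matrix.map_apply, Matrix.neg_apply, h,
    Quaternion.coe_neg, star_neg, Quaternion.star_coe]

/-- Conjugate-transpose of the symmetry relation. -/
lemma conj_lemma (P E T M : Matrix (Fin k) (Fin k) ℍ)
    (hP : Pᴴ = -P) (hE : Eᴴ = -E) (hT : Tᴴ = T)
    (hF1 : M * E * T - E * M + (P * M - M * P) = 0) :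
    -(T * E * Mᴴ) + Mᴴ * E + (P * Mᴴ - Mᴴ * P) = 0 := by
  have key : (M * E * T - E * M + (P * M - M * P))ᴴ
      = -(T * E * Mᴴ) + Mᴴ * E + (P * Mᴴ - Mᴴ * P) := by
    simp only [Matrix.conjTranspose_add, Matrix.conjTranspose_sub, Matrix.conjTranspose_mul,
      hE, hP, hT]
    noncomm_ring
  have h := congrArg Matrix.conjTranspose hF1
  rw [key, Matrix.conjTranspose_zero] at h
  exact h

lemma skewX (P E T : Matrix (Fin k) (Fin k) ℍ)
    (hP : Pᴴ = -P) (hE : Eᴴ = -E) (hT : Tᴴ = T) (hTE : T * E = E * T) :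
    (P - T * E)ᴴ = -(P - T * E) := by
  simp only [Matrix.conjTranspose_sub, Matrix.conjTranspose_mul, hE, hP, hT, Matrix.neg_mul]
  rw [← hTE]
  noncomm_ring

/-- The key commutation, as an abstract ring identity. -/
lemma comm_lemma {R : Type*} [Ring R] (P E T N S Mm Mh : R)
    (hT : ∀ a : R, T * a = a * T)
    (hER : E * (N + S) = (N + S) * E)
    (hF1 : Mm * E * T - E * Mm + (P * Mm - Mm * P) = 0)
    (hF2 : -(T * E * Mh) + Mh * E + (P * Mh - Mh * P) = 0)
    (hS : Mh * Mm = S)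
    (h2 : P * (N + S) - (N + S) * P = 0) :
    (P - T * E) * N = N * (P - T * E) := by
  have hPS : P * S - S * P - T * E * S + S * E * T = 0 := by
    rw [← hS]
    have expand : P * (Mh * Mm) - (Mh * Mm) * P - T * E * (Mh * Mm) + (Mh * Mm) * E * T
        = (-(T * E * Mh) + Mh * E + (P * Mh - Mh * P)) * Mm
          + Mh * (Mm * E * T - E * Mm + (P * Mm - Mm * P)) := by noncomm_ring
    rw [expand, hF1, hF2, zero_mul, mul_zero, add_zero]
  have hPN : P * N - N * P + T * E * S - S * E * T = 0 := by
    have expand : P * N - N * P + T * E * S - S * E * T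
        = (P * (N + S) - (N + S) * P) - (P * S - S * P - T * E * S + S * E * T) := by
      noncomm_ring
    rw [expand, h2, hPS, sub_zero]
  have hb3 : S * E * T - T * (S * E) = 0 := by rw [hT (S * E)]; exact sub_self _
  have hb4 : N * T * E - T * N * E = 0 := by rw [← hT N]; exact sub_self _
  have expand : (P - T * E) * N - N * (P - T * E)
      = (P * N - N * P + T * E * S - S * E * T)
        - T * (E * (N + S) - (N + S) * E)
        + (S * E * T - T * (S * E))
        + (N * T * E - T * N * E) := by noncomm_ring
  have hz : (P - T * E) * N - N * (P - T * E) = 0 := by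
    rw [expand, hPN, hER, hb3, hb4, sub_self, mul_zero]
    simp
  exact sub_eq_zero.mp hz

/-- Final assembly. -/
lemma final_lemma {n : ℕ} (L : Matrix (Fin n) (Fin k) ℍ) (X : Matrix (Fin k) (Fin k) ℍ)
    (hXH : Xᴴ = -X) (hXN : X * (Lᴴ * L) = (Lᴴ * L) * X) :
    (L * X * Lᴴ * Ring.inverse (L * Lᴴ))ᴴ = -(L * X * Lᴴ * Ring.inverse (L * Lᴴ)) := by
  have hAh : (L * X * Lᴴ)ᴴ = -(L * X * Lᴴ) := by
    rw [Matrix.conjTranspose_mul, Matrix.conjTranspose_mul, Matrix.conjTranspose_conjTranspose,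
      hXH]
    simp only [Matrix.mul_neg, Matrix.neg_mul, Matrix.mul_assoc]
  by_cases hB : IsUnit (L * Lᴴ)
  · have hBH : (L * Lᴴ)ᴴ = L * Lᴴ := by
      rw [Matrix.conjTranspose_mul, Matrix.conjTranspose_conjTranspose]
    have hinv1 : (L * Lᴴ) * Ring.inverse (L * Lᴴ) = 1 := Ring.mul_inverse_cancel _ hB
    have hinv2 : Ring.inverse (L * Lᴴ) * (L * Lᴴ) = 1 := Ring.inverse_mul_cancel _ hB
    set Bi := Ring.inverse (L * Lᴴ) with hBidef
    have h1' : Biᴴ * (L * Lᴴ) = 1 := by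
      calc Biᴴ * (L * Lᴴ) = Biᴴ * (L * Lᴴ)ᴴ := by rw [hBH]
        _ = ((L * Lᴴ) * Bi)ᴴ := (Matrix.conjTranspose_mul _ _).symm
        _ = (1 : Matrix (Fin n) (Fin n) ℍ)ᴴ := by rw [hinv1]
        _ = 1 := Matrix.conjTranspose_one
    have hBiH : Biᴴ = Bi := by
      calc Biᴴ = Biᴴ * ((L * Lᴴ) * Bi) := by rw [hinv1, Matrix.mul_one]
        _ = (Biᴴ * (L * Lᴴ)) * Bi := by simp only [Matrix.mul_assoc]
        _ = Bi := by rw [h1', Matrix.one_mul]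
    have hAB : (L * X * Lᴴ) * (L * Lᴴ) = (L * Lᴴ) * (L * X * Lᴴ) := by
      calc (L * X * Lᴴ) * (L * Lᴴ)
          = L * (X * (Lᴴ * L)) * Lᴴ := by simp only [Matrix.mul_assoc]
        _ = L * ((Lᴴ * L) * X) * Lᴴ := by rw [hXN]
        _ = (L * Lᴴ) * (L * X * Lᴴ) := by simp only [Matrix.mul_assoc]
    have hcomm2 : Bi * (L * X * Lᴴ) = (L * X * Lᴴ) * Bi := by
      calc Bi * (L * X * Lᴴ)
          = Bi * (L * X * Lᴴ) * 1 := (Matrix.mul_one _).symm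
        _ = Bi * (L * X * Lᴴ) * ((L * Lᴴ) * Bi) := by rw [hinv1]
        _ = Bi * ((L * X * Lᴴ) * (L * Lᴴ)) * Bi := by simp only [Matrix.mul_assoc]
        _ = Bi * ((L * Lᴴ) * (L * X * Lᴴ)) * Bi := by rw [hAB]
        _ = (Bi * (L * Lᴴ)) * ((L * X * Lᴴ) * Bi) := by simp only [Matrix.mul_assoc]
        _ = (L * X * Lᴴ) * Bi := by rw [hinv2, Matrix.one_mul]
    rw [Matrix.conjTranspose_mul, hBiH, hAh, Matrix.mul_neg, hcomm2]
  · rw [Ring.inverse_non_unit _ hB, Matrix.mul_zero, Matrix.conjTranspose_zero, neg_zero]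

end Stmt10Helpers

/-- If `ρ` generates a circular `t`-symmetry of `M̂ ∈ M_{n,k}`, then
`y := L(ρ − t·i·I_k)L†(LL†)⁻¹` is skew-Hermitian, i.e. `y ∈ sp(n)`. -/
theorem stmt10 {n k : ℕ} (L : Matrix (Fin n) (Fin k) ℍ) (M : Matrix (Fin k) (Fin k) ℍ)
    (hM : InM L M) (t : ℝ) (ht0 : 0 ≤ t) (ht1 : t ≤ 1)
    (ρ : Matrix (Fin k) (Fin k) ℝ) (hρ : ρᵀ = -ρ)
    (h1 : t • rsmul M qi - lsmul qi M + (qmap ρ * M - M * qmap ρ) = 0)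
    (h2 : qmap ρ * (Lᴴ * L + Mᴴ * M) - (Lᴴ * L + Mᴴ * M) * qmap ρ = 0) :
    (L * (qmap ρ - (t • qi) • (1 : Matrix (Fin k) (Fin k) ℍ)) * Lᴴ * Ring.inverse (L * Lᴴ))ᴴ
      = -(L * (qmap ρ - (t • qi) • (1 : Matrix (Fin k) (Fin k) ℍ)) * Lᴴ *
          Ring.inverse (L * Lᴴ)) := by
  obtain ⟨hMsymm, hLpos, hRreal, hRunit, hDelta⟩ := hM
  have hTcomm : ∀ A : Matrix (Fin k) (Fin k) ℍ,
      (((t : ℝ) : ℍ) • (1 : Matrix (Fin k) (Fin k) ℍ)) * A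
        = A * (((t : ℝ) : ℍ) • (1 : Matrix (Fin k) (Fin k) ℍ)) := fun A =>
    Stmt10Helpers.central_comm _ (fun x => Quaternion.coe_commutes t x) A
  have hEH : (qi • (1 : Matrix (Fin k) (Fin k) ℍ))ᴴ = -(qi • (1 : Matrix (Fin k) (Fin k) ℍ)) := by
    rw [Stmt10Helpers.smulone_conjT, Stmt10Helpers.star_qi, neg_smul]
  have hTH : ((((t : ℝ) : ℍ)) • (1 : Matrix (Fin k) (Fin k) ℍ))ᴴ
      = (((t : ℝ) : ℍ)) • (1 : Matrix (Fin k) (Fin k) ℍ) := by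
    rw [Stmt10Helpers.smulone_conjT, Quaternion.star_coe]
  have hPH : (qmap ρ)ᴴ = -(qmap ρ) := Stmt10Helpers.qmap_conjT ρ hρ
  have hXrw : (t • qi) • (1 : Matrix (Fin k) (Fin k) ℍ)
      = (((t : ℝ) : ℍ) • (1 : Matrix (Fin k) (Fin k) ℍ)) * (qi • (1 : Matrix (Fin k) (Fin k) ℍ)) := by
    rw [Matrix.smul_mul, Matrix.one_mul, smul_smul, Quaternion.coe_mul_eq_smul]
  have hF1 : M * (qi • (1 : Matrix (Fin k) (Fin k) ℍ)) * (((t : ℝ) : ℍ) • (1 : Matrix (Fin k) (Fin k) ℍ))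
      - (qi • (1 : Matrix (Fin k) (Fin k) ℍ)) * M + (qmap ρ * M - M * qmap ρ) = 0 := by
    have e1 : t • rsmul M qi
        = M * (qi • (1 : Matrix (Fin k) (Fin k) ℍ)) * (((t : ℝ) : ℍ) • (1 : Matrix (Fin k) (Fin k) ℍ)) := by
      rw [Stmt10Helpers.rsmul_eq_mul, Stmt10Helpers.real_smul_eq,
        hTcomm (M * (qi • (1 : Matrix (Fin k) (Fin k) ℍ)))]
    have e2 : lsmul qi M = (qi • (1 : Matrix (Fin k) (Fin k) ℍ)) * M :=
      Stmt10Helpers.lsmul_eq_mul qi M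
    rw [← e1, ← e2]
    exact h1
  have hF2 := Stmt10Helpers.conj_lemma (qmap ρ) (qi • (1 : Matrix (Fin k) (Fin k) ℍ))
    (((t : ℝ) : ℍ) • (1 : Matrix (Fin k) (Fin k) ℍ)) M hPH hEH hTH hF1
  have hER := Stmt10Helpers.qi_comm_real (Lᴴ * L + Mᴴ * M) hRreal
  have hXN := Stmt10Helpers.comm_lemma (qmap ρ) (qi • (1 : Matrix (Fin k) (Fin k) ℍ))
    (((t : ℝ) : ℍ) • (1 : Matrix (Fin k) (Fin k) ℍ)) (Lᴴ * L) (Mᴴ * M) M Mᴴ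
    hTcomm hER hF1 hF2 rfl h2
  have hXH := Stmt10Helpers.skewX (qmap ρ) (qi • (1 : Matrix (Fin k) (Fin k) ℍ))
    (((t : ℝ) : ℍ) • (1 : Matrix (Fin k) (Fin k) ℍ)) hPH hEH hTH
    (hTcomm (qi • (1 : Matrix (Fin k) (Fin k) ℍ)))
  rw [hXrw]
  exact Stmt10Helpers.final_lemma L _ hXH hXN
end
end

section
/- Let M̂ = [L; 0_k] ∈ M_{n,k} (i.e. M = 0). Then n = k, and there exist Q ∈ Sp(2k), K ∈ GL(k,ℝ), and positive real numbers α₁,…,α_k such that (Q,K).(M̂,U) = ([diag(α₁,…,α_k); 0_k], U). Moreover M̂ is diag(p,q)-equivariant for all unit quaternions p, q (rotational symmetry). -/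
open Matrix

noncomputable section

section AuxLemmas

lemma qmap_apply' {I J : Type*} (A : Matrix I J ℝ) (i : I) (j : J) :
    qmap A i j = ((A i j : ℝ) : ℍ) := rfl

lemma qmap_eq {I J : Type*} (A : Matrix I J ℝ) : qmap A = A.map (algebraMap ℝ ℍ) := by
  refine Matrix.ext fun i j => ?_
  simp [qmap, Quaternion.algebraMap_def]

lemma qmap_mul {I J K : Type*} [Fintype J] (A : Matrix I J ℝ) (B : Matrix J K ℝ) :
    qmap (A * B) = qmap A * qmap B := by
  rw [qmap_eq, qmap_eq, qmap_eq, Matrix.map_mul]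

lemma qmap_one {I : Type*} [Fintype I] [DecidableEq I] :
    qmap (1 : Matrix I I ℝ) = 1 := by
  rw [qmap_eq]; exact Matrix.map_one _ (map_zero _) (map_one _)

lemma qmap_conjTranspose {I J : Type*} (A : Matrix I J ℝ) : (qmap A)ᴴ = qmap Aᵀ := by
  refine Matrix.ext fun i j => ?_
  simp [qmap, conjTranspose_apply, Quaternion.star_coe]

lemma rsmul_eq_mul_diagonal {I J : Type*} [Fintype J] [DecidableEq J] (A : Matrix I J ℍ)
    (x : ℍ) : rsmul A x = A * diagonal (fun _ => x) := by
  refine Matrix.ext fun i j => ?_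
  simp [rsmul]
  exact (Matrix.mul_diagonal (d := fun _ => x) (M := A) i j).symm

lemma rsmul_zero' {I J : Type*} (A : Matrix I J ℍ) : rsmul A 0 = 0 := by
  refine Matrix.ext fun i j => ?_
  simp [rsmul]

lemma zero_rsmul {I J : Type*} (x : ℍ) : rsmul (0 : Matrix I J ℍ) x = 0 := by
  refine Matrix.ext fun i j => ?_
  simp [rsmul]

lemma rsmul_fromRows {I I' J : Type*} (A : Matrix I J ℍ) (B : Matrix I' J ℍ) (x : ℍ) :
    rsmul (fromRows A B) x = fromRows (rsmul A x) (rsmul B x) := by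
  refine Matrix.ext fun i j => ?_
  cases i <;> simp [rsmul, fromRows] <;> rfl

lemma diag_comm_qmap {I : Type*} [Fintype I] [DecidableEq I] (A : Matrix I I ℝ) (x : ℍ) :
    diagonal (fun _ => x) * qmap A = qmap A * diagonal (fun _ => x) := by
  refine Matrix.ext fun i j => ?_
  simp [diagonal_mul, mul_diagonal, qmap, Quaternion.coe_commutes]

/-- `mulVec` as an `ℝ`-linear map. -/
def mulVecR {a b : ℕ} (A : Matrix (Fin a) (Fin b) ℍ) : (Fin b → ℍ) →ₗ[ℝ] (Fin a → ℍ) where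
  toFun := A.mulVec
  map_add' u v := A.mulVec_add u v
  map_smul' r v := by
    funext i
    simp only [Matrix.mulVec, dotProduct, RingHom.id_apply, Pi.smul_apply,
      Finset.smul_sum, mul_smul_comm]

lemma coe_sum {ι : Type*} (s : Finset ι) (f : ι → ℝ) :
    ((∑ i ∈ s, f i : ℝ) : ℍ) = ∑ i ∈ s, ((f i : ℝ) : ℍ) :=
  map_sum (algebraMap ℝ ℍ) f s

lemma dot_self_eq {a : ℕ} (w : Fin a → ℍ) :
    star w ⬝ᵥ w = ((∑ i, Quaternion.normSq (w i) : ℝ) : ℍ) := by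
  rw [coe_sum]
  simp [dotProduct, Quaternion.star_mul_self]

lemma mulVecR_inj {a b : ℕ} (A : Matrix (Fin a) (Fin b) ℍ)
    (h : ∀ v, A.mulVec v = 0 → v = 0) : Function.Injective (mulVecR A) := by
  intro u v huv
  have h2 : A.mulVec (u - v) = 0 := by
    have := Matrix.mulVec_sub A u v
    simp only [mulVecR, LinearMap.coe_mk, AddHom.coe_mk] at huv
    rw [this, huv, sub_self]
  exact sub_eq_zero.mp (h _ h2)

lemma finrank_le_of_inj {a b : ℕ} (A : Matrix (Fin a) (Fin b) ℍ)
    (h : ∀ v, A.mulVec v = 0 → v = 0) : b ≤ a := by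
  have hinj := mulVecR_inj A h
  have hle := LinearMap.finrank_le_finrank_of_injective hinj
  have h1 : Module.finrank ℝ (Fin a → ℍ) = a * 4 := by
    rw [Module.finrank_pi_fintype]
    simp [Quaternion.finrank_eq_four, mul_comm]
  have h2 : Module.finrank ℝ (Fin b → ℍ) = b * 4 := by
    rw [Module.finrank_pi_fintype]
    simp [Quaternion.finrank_eq_four, mul_comm]
  rw [h1, h2] at hle
  omega

/-- In `M_k(ℍ)`, a left inverse is a two-sided inverse. -/
lemma left_inv_two_sided {k : ℕ} (L B : Matrix (Fin k) (Fin k) ℍ)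
    (h : B * L = 1) : L * B = 1 := by
  have hker : ∀ v, L.mulVec v = 0 → v = 0 := by
    intro v hv
    have : (B * L).mulVec v = B.mulVec (L.mulVec v) := (Matrix.mulVec_mulVec v B L).symm
    rw [h, Matrix.one_mulVec, hv, Matrix.mulVec_zero] at this
    exact this
  have hinj := mulVecR_inj L hker
  have hsurj : Function.Surjective (mulVecR L) :=
    (LinearMap.injective_iff_surjective).mp hinj
  choose g hg using hsurj
  let e : Fin k → (Fin k → ℍ) := fun j => Pi.single j (1 : ℍ)
  set C : Matrix (Fin k) (Fin k) ℍ :=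
    Matrix.of fun i j => g (e j) i with hC
  have hLC : L * C = 1 := by
    refine Matrix.ext fun i j => ?_
    have h2 : L.mulVec (g (e j)) i = e j i := by
      have h3 : L.mulVec (g (e j)) = e j := hg (e j)
      rw [h3]
    simp only [Matrix.mul_apply, Matrix.one_apply]
    calc ∑ l, L i l * C l j = L.mulVec (g (e j)) i := by
          simp [hC, Matrix.mulVec, dotProduct]
      _ = e j i := h2
      _ = if i = j then 1 else 0 := by
          simp only [e, Pi.single_apply, eq_comm]
  have hBC : B = C := by
    calc B = B * (L * C) := by rw [hLC, mul_one]
      _ = (B * L) * C := by rw [mul_assoc]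
      _ = C := by rw [h, one_mul]
  rw [hBC, hLC]

end AuxLemmas

/-- If `M̂ = [L; 0] ∈ M_{n,k}`, then `n = k`, up to gauge `L` is diagonal
with positive entries, and `M̂` has rotational symmetry. -/
theorem stmt14 {n k : ℕ} (L : Matrix (Fin n) (Fin k) ℍ)
    (hM : InM L (0 : Matrix (Fin k) (Fin k) ℍ)) :
    n = k ∧
    (∃ (Q : Matrix (Fin n ⊕ Fin k) (Fin n ⊕ Fin k) ℍ) (K : Matrix (Fin k) (Fin k) ℝ)
        (α : Fin k → ℝ), IsSp Q ∧ IsUnit K ∧ (∀ j, 0 < α j) ∧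
        gaugeAct Q K (Mh L 0) =
          Mh (Matrix.of fun i j => if (i : ℕ) = (j : ℕ) then ((α j : ℝ) : ℍ) else 0) 0 ∧
        gaugeAct Q K (Uh n k) = Uh n k) ∧
    (∀ p q : ℍ, ‖p‖ = 1 → ‖q‖ = 1 → Equivariant L 0 !![p, 0; 0, q]) := by
  obtain ⟨-, hLLH, hreal0, hunit0, -⟩ := hM
  have hzz : Lᴴ * L + (0 : Matrix (Fin k) (Fin k) ℍ)ᴴ * 0 = Lᴴ * L := by simp
  rw [hzz] at hreal0 hunit0
  -- L has trivial kernel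
  have hLinj : ∀ v : Fin k → ℍ, L.mulVec v = 0 → v = 0 := by
    obtain ⟨B0, hB1, hB2⟩ := isUnit_iff_exists.mp hunit0
    intro v hv
    have h1 : B0.mulVec ((Lᴴ * L).mulVec v) = v := by
      rw [Matrix.mulVec_mulVec, hB2, Matrix.one_mulVec]
    have h2 : (Lᴴ * L).mulVec v = Lᴴ.mulVec (L.mulVec v) := (Matrix.mulVec_mulVec v Lᴴ L).symm
    rw [h2, hv, Matrix.mulVec_zero, Matrix.mulVec_zero] at h1
    exact h1.symm
  -- Lᴴ has trivial kernel
  have hLHinj : ∀ w : Fin n → ℍ, Lᴴ.mulVec w = 0 → w = 0 := by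
    intro w hw
    by_contra hne
    obtain ⟨r, hr, hdot⟩ := hLLH w hne
    have h0 : (L * Lᴴ).mulVec w = 0 := by
      rw [← Matrix.mulVec_mulVec, hw, Matrix.mulVec_zero]
    rw [h0, dotProduct_zero] at hdot
    have : r = (0 : ℝ) := by
      apply Quaternion.coe_injective
      simpa using hdot.symm
    linarith
  have hn : n = k := le_antisymm (finrank_le_of_inj Lᴴ hLHinj) (finrank_le_of_inj L hLinj)
  subst n
  -- the real matrix R with qmap R = Lᴴ L
  set Rr : Matrix (Fin k) (Fin k) ℝ := Matrix.of (fun i j => ((Lᴴ * L) i j).re) with hRr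
  have hqmapRr : qmap Rr = Lᴴ * L := Matrix.ext fun i j => (hreal0 i j).symm
  have hherm : Rr.IsHermitian := by
    have hH : (Lᴴ * L)ᴴ = Lᴴ * L := by rw [conjTranspose_mul, conjTranspose_conjTranspose]
    refine Matrix.ext fun i j => ?_
    have hij : star ((Lᴴ * L) j i) = (Lᴴ * L) i j := by
      have := congrFun (congrFun hH i) j
      simpa [conjTranspose_apply] using this
    have hji : (Lᴴ * L) j i = star ((Lᴴ * L) i j) := by
      rw [← hij, star_star]
    simp only [conjTranspose_apply, hRr, Matrix.of_apply, star_trivial]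
    rw [hji, Quaternion.re_star]
  have hPD : Rr.PosDef := by
    rw [Matrix.posDef_iff_dotProduct_mulVec]
    refine ⟨hherm, fun x hx => ?_⟩
    set xq : Fin k → ℍ := fun i => ((x i : ℝ) : ℍ) with hxqdef
    have hxq : xq ≠ 0 := by
      intro h
      apply hx
      funext i
      apply Quaternion.coe_injective
      simpa [hxqdef] using congrFun h i
    set w : Fin k → ℍ := L.mulVec xq with hwdef
    have hwne : w ≠ 0 := fun h => hxq (hLinj xq h)
    have key1 : star xq ⬝ᵥ (Lᴴ * L).mulVec xq = star w ⬝ᵥ w := by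
      rw [← Matrix.mulVec_mulVec, Matrix.dotProduct_mulVec, ← Matrix.star_mulVec]
    have hmv : (qmap Rr).mulVec xq = fun i => ((Rr.mulVec x i : ℝ) : ℍ) := by
      funext i
      simp [Matrix.mulVec, dotProduct, qmap_apply', coe_sum, hxqdef]
    have key2 : star xq ⬝ᵥ (Lᴴ * L).mulVec xq = ((x ⬝ᵥ Rr.mulVec x : ℝ) : ℍ) := by
      rw [← hqmapRr, hmv]
      simp [dotProduct, coe_sum, Quaternion.star_coe, hxqdef]
    have key3 := dot_self_eq w
    have hsum : x ⬝ᵥ Rr.mulVec x = ∑ i, Quaternion.normSq (w i) := by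
      apply Quaternion.coe_injective
      rw [← key2, key1, key3]
    have hpos : 0 < ∑ i, Quaternion.normSq (w i) := by
      obtain ⟨i, hi⟩ := Function.ne_iff.mp hwne
      refine Finset.sum_pos' (fun j _ => Quaternion.normSq_nonneg) ⟨i, Finset.mem_univ i, ?_⟩
      have : Quaternion.normSq (w i) ≠ 0 := Quaternion.normSq_ne_zero.mpr (by simpa using hi)
      exact lt_of_le_of_ne Quaternion.normSq_nonneg (Ne.symm this)
    have : (0 : ℝ) < x ⬝ᵥ Rr.mulVec x := by rw [hsum]; exact hpos
    simpa [star_trivial] using this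
  -- spectral decomposition of Rr
  obtain ⟨V, μ, hμpos, hKV, hVK, hspec⟩ :
      ∃ (V : Matrix (Fin k) (Fin k) ℝ) (μ : Fin k → ℝ),
        (∀ i, 0 < μ i) ∧ Vᵀ * V = 1 ∧ V * Vᵀ = 1 ∧ Rr = V * diagonal μ * Vᵀ := by
    refine ⟨hherm.eigenvectorUnitary, hherm.eigenvalues, hPD.eigenvalues_pos, ?_, ?_, ?_⟩
    · have := (Matrix.mem_unitaryGroup_iff'.mp (hherm.eigenvectorUnitary).2)
      simpa [Matrix.star_eq_conjTranspose, Matrix.conjTranspose_eq_transpose_of_trivial] using this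
    · have := (Matrix.mem_unitaryGroup_iff.mp (hherm.eigenvectorUnitary).2)
      simpa [Matrix.star_eq_conjTranspose, Matrix.conjTranspose_eq_transpose_of_trivial] using this
    · have := hherm.spectral_theorem
      simpa [Matrix.star_eq_conjTranspose, Matrix.conjTranspose_eq_transpose_of_trivial] using this
  set α : Fin k → ℝ := fun j => Real.sqrt (μ j) with hαdef
  have hαpos : ∀ j, 0 < α j := fun j => Real.sqrt_pos.mpr (hμpos j)
  have hαμ : ∀ j, α j * α j = μ j := fun j => Real.mul_self_sqrt (hμpos j).le
  -- Vᵀ Rr V = diagonal μ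
  have hF1 : Vᵀ * Rr * V = diagonal μ := by
    calc Vᵀ * Rr * V = Vᵀ * (V * diagonal μ * Vᵀ) * V := by rw [← hspec]
      _ = (Vᵀ * V) * diagonal μ * (Vᵀ * V) := by simp only [Matrix.mul_assoc]
      _ = diagonal μ := by rw [hKV, one_mul, mul_one]
  -- the two-sided inverse of L
  obtain ⟨Bq, hBqdef⟩ : ∃ B : Matrix (Fin k) (Fin k) ℍ,
      B = qmap (V * diagonal (fun j => (μ j)⁻¹) * Vᵀ) * Lᴴ := ⟨_, rfl⟩
  have hreal1 : (V * diagonal (fun j => (μ j)⁻¹) * Vᵀ) * Rr = 1 := by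
    calc (V * diagonal (fun j => (μ j)⁻¹) * Vᵀ) * Rr
        = V * diagonal (fun j => (μ j)⁻¹) * Vᵀ * (V * diagonal μ * Vᵀ) := by rw [← hspec]
      _ = V * (diagonal (fun j => (μ j)⁻¹) * ((Vᵀ * V) * (diagonal μ * Vᵀ))) := by
          simp only [Matrix.mul_assoc]
      _ = V * ((diagonal (fun j => (μ j)⁻¹) * diagonal μ) * Vᵀ) := by
          rw [hKV, one_mul, Matrix.mul_assoc]
      _ = V * Vᵀ := by
          rw [diagonal_mul_diagonal]
          have : (fun j => (μ j)⁻¹ * μ j) = fun _ => (1 : ℝ) := by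
            funext j; exact inv_mul_cancel₀ (hμpos j).ne'
          rw [this, diagonal_one, one_mul]
      _ = 1 := hVK
  have hBL : Bq * L = 1 := by
    calc Bq * L = qmap (V * diagonal (fun j => (μ j)⁻¹) * Vᵀ) * (Lᴴ * L) := by
          rw [hBqdef, Matrix.mul_assoc]
      _ = qmap ((V * diagonal (fun j => (μ j)⁻¹) * Vᵀ) * Rr) := by rw [← hqmapRr, ← qmap_mul]
      _ = 1 := by rw [hreal1, qmap_one]
  have hLB : L * Bq = 1 := left_inv_two_sided L Bq hBL
  refine ⟨rfl, ?_, ?_⟩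
  · -- diagonalization
    set W : Matrix (Fin k) (Fin k) ℝ := diagonal (fun j => (α j)⁻¹) * Vᵀ with hWdef
    set Q11 : Matrix (Fin k) (Fin k) ℍ := qmap W * Lᴴ with hQ11def
    have hWRV : W * Rr * V = diagonal α := by
      calc W * Rr * V = diagonal (fun j => (α j)⁻¹) * (Vᵀ * Rr * V) := by
            rw [hWdef]; simp only [Matrix.mul_assoc]
        _ = diagonal (fun j => (α j)⁻¹) * diagonal μ := by rw [hF1]
        _ = diagonal α := by
            rw [diagonal_mul_diagonal]
            have hfun : (fun j => (α j)⁻¹ * μ j) = α := by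
              funext j
              rw [← hαμ j, ← mul_assoc, inv_mul_cancel₀ (hαpos j).ne', one_mul]
            rw [hfun]
    have hQ11L : Q11 * L * qmap V = qmap (diagonal α) := by
      calc Q11 * L * qmap V = qmap W * (Lᴴ * L) * qmap V := by
            rw [hQ11def]; simp only [Matrix.mul_assoc]
        _ = qmap W * qmap Rr * qmap V := by rw [hqmapRr]
        _ = qmap (W * Rr * V) := by rw [← qmap_mul, ← qmap_mul]
        _ = qmap (diagonal α) := by rw [hWRV]
    have hdd : diagonal (fun j => (α j)⁻¹) * diagonal (fun j => (α j)⁻¹)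
        = diagonal (fun j => (μ j)⁻¹) := by
      rw [diagonal_mul_diagonal]
      have hfun : (fun j => (α j)⁻¹ * (α j)⁻¹) = fun j => (μ j)⁻¹ := by
        funext j
        rw [← hαμ j, mul_inv]
      rw [hfun]
    have hWT : Wᵀ = V * diagonal (fun j => (α j)⁻¹) := by
      rw [hWdef, transpose_mul, diagonal_transpose, transpose_transpose]
    have hWtW : Wᵀ * W = V * diagonal (fun j => (μ j)⁻¹) * Vᵀ := by
      rw [hWT, hWdef]
      calc V * diagonal (fun j => (α j)⁻¹) * (diagonal (fun j => (α j)⁻¹) * Vᵀ)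
          = V * ((diagonal (fun j => (α j)⁻¹) * diagonal (fun j => (α j)⁻¹)) * Vᵀ) := by
            simp only [Matrix.mul_assoc]
        _ = V * diagonal (fun j => (μ j)⁻¹) * Vᵀ := by rw [hdd, Matrix.mul_assoc]
    have hQ11sp : Q11ᴴ * Q11 = 1 := by
      calc Q11ᴴ * Q11 = (L * qmap Wᵀ) * (qmap W * Lᴴ) := by
            rw [hQ11def, conjTranspose_mul, conjTranspose_conjTranspose, qmap_conjTranspose]
        _ = L * (qmap Wᵀ * qmap W * Lᴴ) := by simp only [Matrix.mul_assoc]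
        _ = L * (qmap (V * diagonal (fun j => (μ j)⁻¹) * Vᵀ) * Lᴴ) := by
            rw [← qmap_mul, hWtW]
        _ = L * Bq := by rw [hBqdef]
        _ = 1 := hLB
    have hKinv : (Vᵀ)⁻¹ = V := Matrix.inv_eq_right_inv hKV
    refine ⟨fromBlocks Q11 0 0 (qmap Vᵀ), Vᵀ, α, ?_, ⟨⟨Vᵀ, V, hKV, hVK⟩, rfl⟩,
      hαpos, ?_, ?_⟩
    · show (fromBlocks Q11 0 0 (qmap Vᵀ))ᴴ * fromBlocks Q11 0 0 (qmap Vᵀ) = 1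
      rw [fromBlocks_conjTranspose]
      rw [fromBlocks_multiply]
      simp only [conjTranspose_zero, Matrix.mul_zero, Matrix.zero_mul, add_zero, zero_add,
        hQ11sp]
      rw [qmap_conjTranspose, transpose_transpose, ← qmap_mul, hVK, qmap_one, fromBlocks_one]
    · show fromBlocks Q11 0 0 (qmap Vᵀ) * Mh L 0 * qmap (Vᵀ)⁻¹ = _
      rw [hKinv]
      show fromBlocks Q11 0 0 (qmap Vᵀ) * fromRows L 0 * qmap V = _
      rw [fromBlocks_mul_fromRows]
      simp only [Matrix.mul_zero, Matrix.zero_mul, add_zero, zero_add]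
      rw [fromRows_mul, hQ11L]
      show fromRows (qmap (diagonal α)) (0 * qmap V) = _
      rw [Matrix.zero_mul]
      have hD : qmap (diagonal α) =
          (Matrix.of fun (i j : Fin k) => if (i : ℕ) = (j : ℕ) then ((α j : ℝ) : ℍ) else 0) := by
        refine Matrix.ext fun i j => ?_
        by_cases hij : i = j
        · subst hij
          simp [qmap_apply', Matrix.diagonal_apply_eq]
        · have hvij : ¬ ((i : ℕ) = (j : ℕ)) := fun hc => hij (Fin.val_injective hc)
          simp [qmap_apply', Matrix.diagonal_apply_ne _ hij, hvij]
      rw [hD]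
      rfl
    · show fromBlocks Q11 0 0 (qmap Vᵀ) * Uh k k * qmap (Vᵀ)⁻¹ = _
      rw [hKinv]
      show fromBlocks Q11 0 0 (qmap Vᵀ) * fromRows 0 1 * qmap V = Uh k k
      rw [fromBlocks_mul_fromRows]
      simp only [Matrix.mul_zero, Matrix.zero_mul, Matrix.mul_one, add_zero, zero_add]
      rw [fromRows_mul, Matrix.zero_mul, ← qmap_mul, hKV, qmap_one]
      rfl
  · -- rotational symmetry
    intro p q hp hq
    have hnq : Quaternion.normSq q = 1 := by
      rw [Quaternion.normSq_eq_norm_mul_self, hq]; ring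
    have hnp : Quaternion.normSq p = 1 := by
      rw [Quaternion.normSq_eq_norm_mul_self, hp]; ring
    have hq1 : star q * q = 1 := by rw [Quaternion.star_mul_self, hnq]; exact_mod_cast rfl
    have hq2 : q * star q = 1 := by rw [Quaternion.self_mul_star, hnq]; exact_mod_cast rfl
    have hp1 : star p * p = 1 := by rw [Quaternion.star_mul_self, hnp]; exact_mod_cast rfl
    have hp2 : p * star p = 1 := by rw [Quaternion.self_mul_star, hnp]; exact_mod_cast rfl
    obtain ⟨Q11, hQ11def⟩ : ∃ X : Matrix (Fin k) (Fin k) ℍ,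
        X = L * diagonal (fun _ => star q) * Bq := ⟨_, rfl⟩
    have hconf : confAct !![p, 0; 0, q] (Mh L 0, Uh k k) =
        (rsmul (Mh L 0) q, rsmul (Uh k k) p) := by
      unfold confAct
      rw [show (!![p, 0; 0, q] : Matrix (Fin 2) (Fin 2) ℍ) 1 1 = q from rfl,
        show (!![p, 0; 0, q] : Matrix (Fin 2) (Fin 2) ℍ) 0 1 = 0 from rfl,
        show (!![p, 0; 0, q] : Matrix (Fin 2) (Fin 2) ℍ) 0 0 = p from rfl,
        show (!![p, 0; 0, q] : Matrix (Fin 2) (Fin 2) ℍ) 1 0 = 0 from rfl]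
      rw [rsmul_zero', rsmul_zero', sub_zero, sub_zero]
    have hLLX : ∀ X : Matrix (Fin k) (Fin k) ℍ, Lᴴ * (L * X) = qmap Rr * X := by
      intro X
      rw [← Matrix.mul_assoc, ← hqmapRr]
    have hQsp : Q11ᴴ * Q11 = 1 := by
      have hstar : (star fun _ : Fin k => star q) = fun _ : Fin k => q := by
        funext i; simp
      have h1 : Q11ᴴ = Bqᴴ * (diagonal (fun _ : Fin k => q) * Lᴴ) := by
        rw [hQ11def, conjTranspose_mul, conjTranspose_mul, diagonal_conjTranspose, hstar]
      have hdiag : diagonal (fun _ : Fin k => q) * (diagonal (fun _ : Fin k => star q) * Bq)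
          = Bq := by
        rw [← Matrix.mul_assoc, diagonal_mul_diagonal]
        have : (fun _ : Fin k => q * star q) = fun _ : Fin k => (1 : ℍ) := by
          funext; rw [hq2]
        rw [this, diagonal_one, one_mul]
      calc Q11ᴴ * Q11
          = Bqᴴ * (diagonal (fun _ : Fin k => q) * (Lᴴ * (L * (diagonal (fun _ => star q) * Bq)))) := by
            rw [h1, hQ11def]; simp only [Matrix.mul_assoc]
        _ = Bqᴴ * (diagonal (fun _ : Fin k => q) * (qmap Rr * (diagonal (fun _ => star q) * Bq))) := by
            rw [hLLX]
        _ = Bqᴴ * (qmap Rr * (diagonal (fun _ : Fin k => q) * (diagonal (fun _ => star q) * Bq))) := by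
            rw [← Matrix.mul_assoc (diagonal _) (qmap Rr), diag_comm_qmap, Matrix.mul_assoc]
        _ = Bqᴴ * (qmap Rr * Bq) := by rw [hdiag]
        _ = Bqᴴ * (Lᴴ * (L * Bq)) := by rw [hLLX]
        _ = Bqᴴ * Lᴴ := by rw [hLB, Matrix.mul_one]
        _ = (L * Bq)ᴴ := by rw [conjTranspose_mul]
        _ = 1 := by rw [hLB, conjTranspose_one]
    unfold Equivariant
    refine ⟨fromBlocks Q11 0 0 (diagonal (fun _ => star p)), 1, ?_, isUnit_one, ?_, ?_⟩
    · show (fromBlocks Q11 0 0 (diagonal (fun _ => star p)))ᴴ *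
        fromBlocks Q11 0 0 (diagonal (fun _ => star p)) = 1
      rw [fromBlocks_conjTranspose, fromBlocks_multiply]
      have hstarp : (star fun _ : Fin k => star p) = fun _ : Fin k => p := by
        funext i; simp
      simp only [conjTranspose_zero, Matrix.mul_zero, Matrix.zero_mul, add_zero, zero_add,
        hQsp, diagonal_conjTranspose, hstarp, diagonal_mul_diagonal, hp2, diagonal_one,
        fromBlocks_one]
    · rw [hconf]
      show fromBlocks Q11 0 0 (diagonal (fun _ => star p)) * rsmul (Mh L 0) q *
        qmap (1 : Matrix (Fin k) (Fin k) ℝ)⁻¹ = Mh L 0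
      have hinv1 : (1 : Matrix (Fin k) (Fin k) ℝ)⁻¹ = 1 :=
        Matrix.inv_eq_right_inv (by rw [one_mul])
      rw [hinv1, qmap_one, Matrix.mul_one]
      show fromBlocks Q11 0 0 (diagonal (fun _ => star p)) * rsmul (fromRows L 0) q
        = fromRows L 0
      rw [rsmul_fromRows, zero_rsmul, rsmul_eq_mul_diagonal, fromBlocks_mul_fromRows]
      simp only [Matrix.mul_zero, Matrix.zero_mul, add_zero, zero_add]
      have hmain : Q11 * (L * diagonal (fun _ : Fin k => q)) = L := by
        have hBLd : Bq * (L * diagonal (fun _ : Fin k => q)) = diagonal (fun _ : Fin k => q) := by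
          rw [← Matrix.mul_assoc, hBL, one_mul]
        calc Q11 * (L * diagonal (fun _ : Fin k => q))
            = L * (diagonal (fun _ : Fin k => star q) *
                (Bq * (L * diagonal (fun _ : Fin k => q)))) := by
              rw [hQ11def]; simp only [Matrix.mul_assoc]
          _ = L * (diagonal (fun _ : Fin k => star q) * diagonal (fun _ : Fin k => q)) := by
              rw [hBLd]
          _ = L := by
              rw [diagonal_mul_diagonal]
              have : (fun _ : Fin k => star q * q) = fun _ : Fin k => (1 : ℍ) := by
                funext; rw [hq1]
              rw [this, diagonal_one, Matrix.mul_one]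
      exact congrArg (fun X => fromRows X (0 : Matrix (Fin k) (Fin k) ℍ)) hmain
    · rw [hconf]
      show fromBlocks Q11 0 0 (diagonal (fun _ => star p)) * rsmul (Uh k k) p *
        qmap (1 : Matrix (Fin k) (Fin k) ℝ)⁻¹ = Uh k k
      have hinv1 : (1 : Matrix (Fin k) (Fin k) ℝ)⁻¹ = 1 :=
        Matrix.inv_eq_right_inv (by rw [one_mul])
      rw [hinv1, qmap_one, Matrix.mul_one]
      show fromBlocks Q11 0 0 (diagonal (fun _ => star p)) * rsmul (fromRows 0 1) p
        = fromRows 0 1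
      rw [rsmul_fromRows, zero_rsmul,
        show rsmul (1 : Matrix (Fin k) (Fin k) ℍ) p = diagonal (fun _ => p) from
          Matrix.ext fun i j => by by_cases h : i = j <;> simp [rsmul, Matrix.one_apply, h],
        fromBlocks_mul_fromRows]
      simp only [Matrix.mul_zero, Matrix.zero_mul, add_zero, zero_add,
        diagonal_mul_diagonal, hp1, diagonal_one]
end
end
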